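/- arXiv:1402.0483 — 4 statements merged into one kernel-verified Lean document; each statement's English description precedes it below -/
import Mathlib

section
/- Let Φ be a CPT map on M_2(ℂ) given by finitely many Kraus matrices. If the matrix representation [Φ] = Σ_i V_i ⊗ conj(V_i) has the PQ-channel form (zero entries at positions (1,2),(1,3),(2,1),(2,4),(3,1),(3,4),(4,2),(4,3)), then Φ admits a Kraus representation consisting exclusively of diagonal and anti-diagonal matrices. -/
open Matrix Kronecker

lemma kraus_sum_entry {m : ℕ} (V : Fin m → Matrix (Fin 2) (Fin 2) ℂ)
    (ρ : Matrix (Fin 2) (Fin 2) ℂ) (a b : Fin 2) :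
    (∑ i, V i * ρ * (V i)ᴴ) a b =
      ∑ p, ∑ q, ρ p q * ∑ i, V i a p * star (V i b q) := by
  calc (∑ i, V i * ρ * (V i)ᴴ) a b
      = ∑ i, ∑ p, ∑ q, ρ p q * (V i a p * star (V i b q)) := by
        simp only [Matrix.sum_apply]
        refine Finset.sum_congr rfl fun i _ => ?_
        simp only [Matrix.mul_apply, Matrix.conjTranspose_apply, Fin.sum_univ_two]
        ring
    _ = ∑ p, ∑ i, ∑ q, ρ p q * (V i a p * star (V i b q)) := Finset.sum_comm
    _ = ∑ p, ∑ q, ∑ i, ρ p q * (V i a p * star (V i b q)) :=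
        Finset.sum_congr rfl fun p _ => Finset.sum_comm
    _ = ∑ p, ∑ q, ρ p q * ∑ i, V i a p * star (V i b q) := by
        simp [Finset.mul_sum]

/-- If a CPT map on `M_2(ℂ)` has a matrix representation in PQ-channel form
(zeros at the eight positions outside the corners and the central block),
then it admits a Kraus representation consisting exclusively of diagonal and
anti-diagonal matrices. -/
theorem pq_channel_has_diag_antidiag_kraus {m : ℕ}
    (V : Fin m → Matrix (Fin 2) (Fin 2) ℂ)
    (htp : ∑ i, (V i)ᴴ * V i = 1)
    (hpq : let M := ∑ i, (V i) ⊗ₖ ((V i).map (starRingEnd ℂ))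
      M (0, 0) (0, 1) = 0 ∧ M (0, 0) (1, 0) = 0 ∧
      M (0, 1) (0, 0) = 0 ∧ M (0, 1) (1, 1) = 0 ∧
      M (1, 0) (0, 0) = 0 ∧ M (1, 0) (1, 1) = 0 ∧
      M (1, 1) (0, 1) = 0 ∧ M (1, 1) (1, 0) = 0) :
    ∃ (k : ℕ) (W : Fin k → Matrix (Fin 2) (Fin 2) ℂ),
      (∀ j, (W j).IsDiag ∨ ((W j) 0 0 = 0 ∧ (W j) 1 1 = 0)) ∧
      (∀ ρ : Matrix (Fin 2) (Fin 2) ℂ,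
        ∑ i, V i * ρ * (V i)ᴴ = ∑ j, W j * ρ * (W j)ᴴ) := by
  obtain ⟨h1, h2, h3, h4, h5, h6, h7, h8⟩ := hpq
  simp only [Matrix.sum_apply, Matrix.kroneckerMap_apply, Matrix.map_apply]
    at h1 h2 h3 h4 h5 h6 h7 h8
  set D : Fin m → Matrix (Fin 2) (Fin 2) ℂ :=
    fun i => Matrix.of fun a b => if a = b then V i a b else 0 with hDdef
  set A : Fin m → Matrix (Fin 2) (Fin 2) ℂ :=
    fun i => Matrix.of fun a b => if a = b then 0 else V i a b with hAdef
  have happL : ∀ i : Fin m, Fin.append D A (Fin.castAdd m i) = D i :=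
    fun i => Fin.append_left D A i
  have happR : ∀ i : Fin m, Fin.append D A (Fin.natAdd m i) = A i :=
    fun i => Fin.append_right D A i
  refine ⟨m + m, Fin.append D A, ?_, ?_⟩
  · intro j
    refine Fin.addCases (fun i => Or.inl ?_) (fun i => Or.inr ?_) j
    · rw [happL]
      intro a b hab
      simp [hDdef, hab]
    · rw [happR]
      constructor <;> simp [hAdef]
  · intro ρ
    have hsplit : (∑ j, Fin.append D A j * ρ * (Fin.append D A j)ᴴ)
        = (∑ i, D i * ρ * (D i)ᴴ) + ∑ i, A i * ρ * (A i)ᴴ := by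
      rw [Fin.sum_univ_add]
      congr 1 <;> refine Finset.sum_congr rfl fun i _ => ?_
      · rw [happL]
      · rw [happR]
    rw [hsplit]
    ext a b
    rw [Matrix.add_apply, kraus_sum_entry, kraus_sum_entry, kraus_sum_entry]
    fin_cases a <;> fin_cases b <;>
      simp only [Fin.sum_univ_two, hDdef, hAdef, Matrix.of_apply, Fin.isValue] <;>
      norm_num <;>
      simp only [h1, h2, h3, h4, h5, h6, h7, h8, mul_zero, add_zero, zero_add] <;>
      try ring
end

section
/- The number of paths of a nearest-neighbor walk on ℤ of length 2k starting at 0 and first returning to 0 at time 2k equals (1/(2k−1)) · C(2k, k), for every k ≥ 1. -/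
open List DyckStep

/-- weight of a step -/
def wt (b : Bool) : ℤ := if b then 1 else -1

/-- value of a walk -/
def sval (l : List Bool) : ℤ := (l.map wt).sum

@[simp] lemma sval_nil : sval [] = 0 := rfl
@[simp] lemma sval_cons (b : Bool) (l : List Bool) : sval (b :: l) = wt b + sval l := by
  simp [sval]
@[simp] lemma sval_append (l m : List Bool) : sval (l ++ m) = sval l + sval m := by
  simp [sval]
@[simp] lemma sval_singleton (b : Bool) : sval [b] = wt b := by simp [sval]

lemma wt_true : wt true = 1 := rfl
lemma wt_false : wt false = -1 := rfl
lemma wt_cases (b : Bool) : wt b = 1 ∨ wt b = -1 := by cases b <;> simp [wt]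

@[simp] lemma sval_map_not (l : List Bool) : sval (l.map not) = - sval l := by
  induction l with
  | nil => simp
  | cons b t ih => cases b <;> simp [ih, wt] <;> ring

lemma sval_count (l : List Bool) :
    sval l = (l.count true : ℤ) - (l.count false : ℤ) := by
  induction l with
  | nil => simp
  | cons b t ih =>
      cases b <;> simp [ih, wt, count_cons] <;> push_cast <;> ring

lemma count_add_count (l : List Bool) : l.count true + l.count false = l.length := by
  induction l with
  | nil => simp
  | cons b t ih => cases b <;> simp [count_cons] <;> omega

lemma sval_take_succ (l : List Bool) (n : ℕ) (h : n < l.length) :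
    sval (l.take (n + 1)) = sval (l.take n) + wt l[n] := by
  rw [List.take_succ, List.getElem?_eq_getElem h, Option.toList_some, sval_append,
    sval_singleton]

/-- value of a prefix as a range-indexed sum -/
lemma sval_take_range (l : List Bool) (n : ℕ) :
    sval (l.take n) = ∑ j ∈ Finset.range l.length,
      if j < n then wt (l.getD j false) else 0 := by
  induction l generalizing n with
  | nil => simp
  | cons b t ih =>
      cases n with
      | zero => simp
      | succ m =>
          rw [List.length_cons, Finset.sum_range_succ', List.take_succ_cons, sval_cons, ih m]
          simp only [List.getD_cons_succ, List.getD_cons_zero, Nat.succ_lt_succ_iff,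
            Nat.zero_lt_succ, if_true]
          ring

/-- value of a prefix as a `Fin`-indexed sum, for `ofFn` lists -/
lemma psum_eq_sval {m : ℕ} (f : Fin m → Bool) (n : ℕ) :
    (∑ i : Fin m, if (i : ℕ) < n then (if f i then (1 : ℤ) else -1) else 0) =
      sval ((List.ofFn f).take n) := by
  have key : ∀ i : Fin m,
      (if (i : ℕ) < n then (if f i then (1 : ℤ) else -1) else 0) =
      (fun j : ℕ => if j < n then wt ((List.ofFn f).getD j false) else 0) (i : ℕ) := by
    intro i
    have hg : (List.ofFn f).getD (i : ℕ) false = f i := by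
      rw [List.getD_eq_getElem _ _ (by simpa using i.isLt), List.getElem_ofFn]
    simp only [hg, wt]
  rw [Finset.sum_congr rfl fun i _ => key i]
  exact (Fin.sum_univ_eq_sum_range (fun j => if j < n then wt ((List.ofFn f).getD j false)
    else 0) m).trans (by rw [sval_take_range, List.length_ofFn])

lemma sum_eq_sval {m : ℕ} (f : Fin m → Bool) :
    (∑ i, (if f i then (1 : ℤ) else -1)) = sval (List.ofFn f) := by
  have h : sval (List.ofFn f) = sval ((List.ofFn f).take m) := by
    rw [List.take_of_length_le (by simp)]
  rw [h, ← psum_eq_sval]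
  refine Finset.sum_congr rfl fun i _ => by simp [i.isLt]

lemma ofFn_getD {m : ℕ} (l : List Bool) (h : l.length = m) :
    List.ofFn (fun i : Fin m => l.getD (i : ℕ) false) = l := by
  subst h
  rw [show (fun i : Fin l.length => l.getD (i : ℕ) false)
      = (fun i : Fin l.length => l[(i : ℕ)]) from funext fun i => List.getD_eq_getElem _ _ i.isLt]
  exact List.ofFn_getElem

/-- translation from DyckStep lists to Bool lists -/
def isU (s : DyckStep) : Bool := decide (s = U)

lemma count_map_isU_true (s : List DyckStep) : (s.map isU).count true = s.count U := by
  induction s with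
  | nil => simp
  | cons a t ih => cases a <;> simp [isU, count_cons, ih]

lemma count_map_isU_false (s : List DyckStep) : (s.map isU).count false = s.count D := by
  induction s with
  | nil => simp
  | cons a t ih => cases a <;> simp [isU, count_cons, ih]

/-- translation back -/
def toStep (b : Bool) : DyckStep := bif b then U else D

lemma count_map_toStep_U (m : List Bool) : (m.map toStep).count U = m.count true := by
  induction m with
  | nil => simp
  | cons a t ih => cases a <;> simp [toStep, count_cons, ih]

lemma count_map_toStep_D (m : List Bool) : (m.map toStep).count D = m.count false := by
  induction m with
  | nil => simp
  | cons a t ih => cases a <;> simp [toStep, count_cons, ih]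

/-- the Bool list of a Dyck word, as a positive first-return path -/
def dlist (p : DyckWord) : List Bool := true :: (p.toList.map isU ++ [false])

lemma dlist_length (p : DyckWord) : (dlist p).length = 2 * p.semilength + 2 := by
  simp [dlist, p.two_mul_semilength_eq_length]

lemma sval_dlist_mid (p : DyckWord) : sval (p.toList.map isU) = 0 := by
  rw [sval_count, count_map_isU_true, count_map_isU_false, p.count_U_eq_count_D]
  ring

lemma sval_dlist_mid_take (p : DyckWord) (n : ℕ) :
    0 ≤ sval ((p.toList.map isU).take n) := by
  rw [← List.map_take, sval_count, count_map_isU_true, count_map_isU_false]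
  have := p.count_D_le_count_U n
  omega

lemma sval_dlist (p : DyckWord) : sval (dlist p) = 0 := by
  rw [dlist, sval_cons, sval_append, sval_singleton, sval_dlist_mid, wt_true, wt_false]
  ring

lemma sval_dlist_take (p : DyckWord) (n : ℕ) (h1 : 0 < n)
    (h2 : n < 2 * p.semilength + 2) : 1 ≤ sval ((dlist p).take n) := by
  obtain ⟨m, rfl⟩ : ∃ m, n = m + 1 := ⟨n - 1, by omega⟩
  have hm : m ≤ (p.toList.map isU).length := by
    simp only [List.length_map, ← p.two_mul_semilength_eq_length]
    omega
  rw [dlist, List.take_succ_cons, List.take_append,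
    show m - (p.toList.map isU).length = 0 by omega, List.take_zero, List.append_nil,
    sval_cons, wt_true]
  have := sval_dlist_mid_take p m
  omega

/-- positivity propagation -/
lemma stay_pos (l : List Bool) (N : ℕ) (hlen : l.length = N)
    (hne : ∀ n, 0 < n → n < N → sval (l.take n) ≠ 0)
    (h1 : sval (l.take 1) = 1) :
    ∀ n, 0 < n → n < N → 1 ≤ sval (l.take n) := by
  intro n
  induction n with
  | zero => omega
  | succ m ih =>
      intro _ hlt
      rcases Nat.eq_zero_or_pos m with rfl | hm
      · rw [h1]
      · have hmlt : m < l.length := by omega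
        have hstep := sval_take_succ l m hmlt
        have hprev := ih (by omega) (by omega)
        have hne' := hne (m + 1) (by omega) hlt
        rcases wt_cases l[m] with h | h <;> omega

/-- decomposition of a positive first-return path -/
lemma decomp (l : List Bool) (k : ℕ) (hk : 1 ≤ k) (hlen : l.length = 2 * k)
    (h0 : sval l = 0)
    (hne : ∀ n, 0 < n → n < 2 * k → sval (l.take n) ≠ 0)
    (h1 : sval (l.take 1) = 1) :
    ∃ m : List Bool, l = true :: (m ++ [false]) ∧ m.length = 2 * k - 2 ∧
      sval m = 0 ∧ ∀ n, 0 ≤ sval (m.take n) := by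
  have hpos := stay_pos l (2 * k) hlen hne h1
  obtain ⟨c, t, rfl⟩ : ∃ c t, l = c :: t := by
    cases l with
    | nil => simp at hlen; omega
    | cons c t => exact ⟨c, t, rfl⟩
  have hc : c = true := by
    rw [List.take_succ_cons, List.take_zero, sval_cons, sval_nil, add_zero] at h1
    cases c
    · rw [wt_false] at h1; omega
    · rfl
  subst hc
  have ht : t ≠ [] := by
    intro h
    rw [h] at hlen
    simp at hlen
    omega
  -- last step is `false`
  have hGL : t.dropLast ++ [t.getLast ht] = t := List.dropLast_append_getLast ht
  have htlen : t.length = 2 * k - 1 := by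
    simp only [List.length_cons] at hlen
    omega
  have hDL : (true :: t).dropLast = (true :: t).take (2 * k - 1) := by
    rw [List.dropLast_eq_take]
    congr 1
  have hGL' : (true :: t).dropLast ++ [(true :: t).getLast (by simp)] = true :: t :=
    List.dropLast_append_getLast _
  have hsplit : sval (true :: t) =
      sval ((true :: t).take (2 * k - 1)) + wt ((true :: t).getLast (by simp)) := by
    conv_lhs => rw [← hGL']
    rw [sval_append, sval_singleton, hDL]
  have hpre : 1 ≤ sval ((true :: t).take (2 * k - 1)) := hpos _ (by omega) (by omega)
  have hwl : wt ((true :: t).getLast (by simp)) = -1 := by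
    rcases wt_cases ((true :: t).getLast (by simp)) with h | h <;> omega
  have hlastf : (true :: t).getLast (by simp) = false := by
    cases h : (true :: t).getLast (by simp)
    · rfl
    · rw [h, wt_true] at hwl; omega
  rw [List.getLast_cons ht] at hlastf
  refine ⟨t.dropLast, ?_, ?_, ?_, ?_⟩
  · rw [← hlastf, hGL]
  · simp only [List.length_dropLast, htlen]
    omega
  · rw [← hGL, hlastf] at h0
    rw [sval_cons, sval_append, sval_singleton, wt_true, wt_false] at h0
    omega
  · intro n
    have hml : t.dropLast.length = 2 * k - 2 := by
      simp only [List.length_dropLast, htlen]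
      omega
    rcases le_or_gt (2 * k - 2) n with hge | hlt
    · rw [List.take_of_length_le (by omega)]
      rw [← hGL, hlastf] at h0
      rw [sval_cons, sval_append, sval_singleton, wt_true, wt_false] at h0
      omega
    · rcases Nat.eq_zero_or_pos n with rfl | hn
      · simp
      · have hkey : sval ((true :: t).take (n + 1)) = 1 + sval (t.dropLast.take n) := by
          conv_lhs => rw [← hGL, hlastf]
          rw [List.take_succ_cons, List.take_append,
            show n - t.dropLast.length = 0 by omega, List.take_zero, List.append_nil,
            sval_cons, wt_true]
        have := hpos (n + 1) (by omega) (by omega)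
        rw [hkey] at this
        omega

/-- building a Dyck word from a balanced nonnegative Bool list -/
def ofBalanced (m : List Bool) (h0 : sval m = 0) (hpre : ∀ n, 0 ≤ sval (m.take n)) :
    DyckWord where
  toList := m.map toStep
  count_U_eq_count_D := by
    rw [count_map_toStep_U, count_map_toStep_D]
    have := sval_count m
    omega
  count_D_le_count_U i := by
    rw [← List.map_take, count_map_toStep_U, count_map_toStep_D]
    have h1 := hpre i
    have h2 := sval_count (m.take i)
    omega

lemma ofBalanced_semilength (m : List Bool) (h0 : sval m = 0)
    (hpre : ∀ n, 0 ≤ sval (m.take n)) (k : ℕ) (hlen : m.length = 2 * k) :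
    (ofBalanced m h0 hpre).semilength = k := by
  have h1 := sval_count m
  have h2 := count_add_count m
  show (m.map toStep).count U = k
  rw [count_map_toStep_U]
  omega

lemma dlist_ofBalanced (m : List Bool) (h0 : sval m = 0)
    (hpre : ∀ n, 0 ≤ sval (m.take n)) :
    dlist (ofBalanced m h0 hpre) = true :: (m ++ [false]) := by
  show true :: ((m.map toStep).map isU ++ [false]) = _
  rw [List.map_map, show isU ∘ toStep = id from funext fun b => by cases b <;> rfl,
    List.map_id]

/-- the Bool list of a signed Dyck word -/
def flist (b : Bool) (p : DyckWord) : List Bool :=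
  if b then dlist p else (dlist p).map not

lemma flist_length (b : Bool) (p : DyckWord) :
    (flist b p).length = 2 * p.semilength + 2 := by
  cases b <;> simp [flist, dlist_length]

lemma sval_flist (b : Bool) (p : DyckWord) : sval (flist b p) = 0 := by
  cases b <;> simp [flist, sval_dlist]

lemma sval_flist_take (b : Bool) (p : DyckWord) (n : ℕ) (h1 : 0 < n)
    (h2 : n < 2 * p.semilength + 2) : sval ((flist b p).take n) ≠ 0 := by
  have := sval_dlist_take p n h1 h2
  cases b
  · rw [flist, if_neg (by simp), ← List.map_take, sval_map_not]
    omega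
  · rw [flist, if_pos rfl]
    omega

lemma flist_getD_zero (b : Bool) (p : DyckWord) : (flist b p).getD 0 false = b := by
  cases b <;> simp [flist, dlist]

/-- the path of a signed Dyck word -/
def pathOf (k : ℕ) (b : Bool) (p : DyckWord) : Fin (2 * k) → Bool :=
  fun i => (flist b p).getD (i : ℕ) false

lemma ofFn_pathOf (k : ℕ) (hk : 1 ≤ k) (b : Bool) (p : DyckWord)
    (hp : p.semilength = k - 1) : List.ofFn (pathOf k b p) = flist b p :=
  ofFn_getD _ (by rw [flist_length, hp]; omega)

/-- The number of nearest-neighbor paths on ℤ of length `2k` starting at `0`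
and first returning to `0` at time `2k` is `(1/(2k-1)) · C(2k,k)`, stated
multiplicatively as `(2k-1) · #paths = C(2k,k)`. Paths are encoded by their
step sequences `f : Fin (2k) → Bool` (`true` = step `+1`, `false` = step `-1`);
the position after `n` steps is the sum of the first `n` steps. -/
theorem count_first_return_paths (k : ℕ) (hk : 1 ≤ k) :
    (2 * k - 1) * Set.ncard {f : Fin (2 * k) → Bool |
        (∑ i, (if f i then (1 : ℤ) else -1)) = 0 ∧
        ∀ n : ℕ, 0 < n → n < 2 * k →
          (∑ i : Fin (2 * k), if (i : ℕ) < n then (if f i then (1 : ℤ) else -1) else 0) ≠ 0} =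
      Nat.choose (2 * k) k := by
  set S : Set (Fin (2 * k) → Bool) := {f : Fin (2 * k) → Bool |
        (∑ i, (if f i then (1 : ℤ) else -1)) = 0 ∧
        ∀ n : ℕ, 0 < n → n < 2 * k →
          (∑ i : Fin (2 * k), if (i : ℕ) < n then (if f i then (1 : ℤ) else -1) else 0) ≠ 0}
    with hS
  -- membership of constructed paths
  have hmem : ∀ (b : Bool) (p : DyckWord), p.semilength = k - 1 → pathOf k b p ∈ S := by
    intro b p hp
    constructor
    · rw [sum_eq_sval, ofFn_pathOf k hk b p hp, sval_flist]
    · intro n hn1 hn2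
      rw [psum_eq_sval, ofFn_pathOf k hk b p hp]
      exact sval_flist_take b p n hn1 (by rw [hp]; omega)
  -- the bijection
  let G : Bool × {p : DyckWord // p.semilength = k - 1} → S :=
    fun x => ⟨pathOf k x.1 x.2.1, hmem x.1 x.2.1 x.2.2⟩
  have hGbij : Function.Bijective G := by
    constructor
    · rintro ⟨b, p, hp⟩ ⟨b', p', hp'⟩ hGe
      have hfe : pathOf k b p = pathOf k b' p' := congrArg Subtype.val hGe
      have hl : flist b p = flist b' p' := by
        rw [← ofFn_pathOf k hk b p hp, ← ofFn_pathOf k hk b' p' hp', hfe]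
      have hb : b = b' := by
        rw [← flist_getD_zero b p, ← flist_getD_zero b' p', hl]
      subst hb
      have hd : dlist p = dlist p' := by
        cases b
        · have : (dlist p).map not = (dlist p').map not := by
            simpa [flist] using hl
          exact List.map_injective_iff.mpr (fun x y => by cases x <;> cases y <;> simp) this
        · simpa [flist] using hl
      have hmid : p.toList.map isU = p'.toList.map isU := by
        have h2 : p.toList.map isU ++ [false] = p'.toList.map isU ++ [false] := by
          simpa [dlist] using hd
        exact List.append_cancel_right h2
      have htl : p.toList = p'.toList :=
        List.map_injective_iff.mpr (fun x y => by cases x <;> cases y <;> simp [isU]) hmid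
      simp only [Prod.mk.injEq, Subtype.mk.injEq]
      exact ⟨trivial, DyckWord.ext htl⟩
    · rintro ⟨f, hf0, hfne⟩
      set l : List Bool := List.ofFn f with hldef
      have hlen : l.length = 2 * k := by simp [hldef]
      have h0 : sval l = 0 := by rw [← sum_eq_sval]; exact hf0
      have hne : ∀ n, 0 < n → n < 2 * k → sval (l.take n) ≠ 0 := by
        intro n h1 h2
        rw [← psum_eq_sval]
        exact hfne n h1 h2
      obtain ⟨c, t, hct⟩ : ∃ c t, l = c :: t := by
        cases hl : l with
        | nil => rw [hl] at hlen; simp at hlen; omega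
        | cons c t => exact ⟨c, t, rfl⟩
      set l₀ : List Bool := if c then l else l.map not with hl₀
      have hlen₀ : l₀.length = 2 * k := by cases c <;> simp [hl₀, hlen]
      have h0₀ : sval l₀ = 0 := by cases c <;> simp [hl₀, h0]
      have hne₀ : ∀ n, 0 < n → n < 2 * k → sval (l₀.take n) ≠ 0 := by
        intro n h1 h2
        cases c
        · rw [hl₀, if_neg (by simp), ← List.map_take, sval_map_not]
          have := hne n h1 h2
          omega
        · rw [hl₀, if_pos rfl]
          exact hne n h1 h2
      have h1₀ : sval (l₀.take 1) = 1 := by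
        cases c <;>
          simp [hl₀, hct, List.take_succ_cons, wt_true]
      obtain ⟨m, hLm, hmlen, hm0, hmpre⟩ := decomp l₀ k hk hlen₀ h0₀ hne₀ h1₀
      refine ⟨⟨c, ⟨ofBalanced m hm0 hmpre,
        ofBalanced_semilength m hm0 hmpre (k - 1) (by omega)⟩⟩, ?_⟩
      have hfl : flist c (ofBalanced m hm0 hmpre) = l := by
        have hd : dlist (ofBalanced m hm0 hmpre) = l₀ := by
          rw [dlist_ofBalanced, ← hLm]
        cases c
        · rw [flist, if_neg (by simp), hd, hl₀, if_neg (by simp), List.map_map]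
          rw [show (not ∘ not) = id from funext fun b => by cases b <;> rfl, List.map_id]
        · rw [flist, if_pos rfl, hd, hl₀, if_pos rfl]
      apply Subtype.ext
      show pathOf k c _ = f
      funext i
      show (flist c _).getD (i : ℕ) false = f i
      rw [hfl, hldef, List.getD_eq_getElem _ _ (by simp [i.isLt]), List.getElem_ofFn]
  -- cardinality computation
  have hcard : S.ncard = 2 * catalan (k - 1) := by
    rw [← Nat.card_coe_set_eq, ← Nat.card_eq_of_bijective G hGbij,
      Nat.card_eq_fintype_card, Fintype.card_prod, Fintype.card_bool,
      DyckWord.card_dyckWord_semilength_eq_catalan]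
  rw [hcard]
  -- arithmetic
  obtain ⟨j, rfl⟩ : ∃ j, k = j + 1 := ⟨k - 1, by omega⟩
  simp only [Nat.add_sub_cancel]
  have h1 : (j + 1) * catalan j = Nat.centralBinom j := succ_mul_catalan_eq_centralBinom j
  have h2 : (j + 1) * Nat.centralBinom (j + 1) = 2 * (2 * j + 1) * Nat.centralBinom j :=
    Nat.succ_mul_centralBinom_succ j
  have h3 : (j + 1) * ((2 * (j + 1) - 1) * (2 * catalan j)) =
      (j + 1) * Nat.centralBinom (j + 1) := by
    rw [show 2 * (j + 1) - 1 = 2 * j + 1 by omega, h2, ← h1]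
    ring
  have h4 := Nat.eq_of_mul_eq_mul_left (Nat.succ_pos j) h3
  rw [h4]
  rfl
end

section
/- The series Σ_{k=1}^∞ (1/(2k−1)) · C(2k,k) · (1/4)^k converges and equals 1. -/
open Filter Topology Finset

/-- `b n = C(2n,n)/4^n`. -/
noncomputable def bCB (n : ℕ) : ℝ := (Nat.centralBinom n : ℝ) / 4 ^ n

lemma bCB_pos (n : ℕ) : 0 < bCB n := by
  apply div_pos
  · exact_mod_cast (Nat.centralBinom_pos n)
  · positivity

lemma bCB_succ (n : ℕ) : bCB (n + 1) = (2 * n + 1) / (2 * n + 2) * bCB n := by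
  have h := Nat.succ_mul_centralBinom_succ n
  have h' : ((n : ℝ) + 1) * Nat.centralBinom (n + 1) = 2 * (2 * n + 1) * Nat.centralBinom n := by
    exact_mod_cast congrArg (Nat.cast : ℕ → ℝ) h
  have hn1 : ((n : ℝ) + 1) ≠ 0 := by positivity
  have h4 : (4 : ℝ) ^ (n + 1) ≠ 0 := by positivity
  unfold bCB
  rw [pow_succ]
  field_simp
  linear_combination 2 * h'

lemma bCB_sq (n : ℕ) : ((n : ℝ) + 1) * bCB n ^ 2 ≤ 1 := by
  induction n with
  | zero => simp [bCB, Nat.centralBinom]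
  | succ n ih =>
    rw [bCB_succ]
    have hb := bCB_pos n
    have key : ((n : ℝ) + 1 + 1) * ((2 * n + 1) / (2 * n + 2)) ^ 2 ≤ (n + 1) := by
      rw [div_pow, mul_div_assoc', div_le_iff₀ (by positivity)]
      nlinarith [sq_nonneg ((n : ℝ))]
    push_cast
    calc ((n : ℝ) + 1 + 1) * ((2 * n + 1) / (2 * n + 2) * bCB n) ^ 2
        = (((n : ℝ) + 1 + 1) * ((2 * n + 1) / (2 * n + 2)) ^ 2) * bCB n ^ 2 := by ring
      _ ≤ ((n : ℝ) + 1) * bCB n ^ 2 := by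
          apply mul_le_mul_of_nonneg_right key (by positivity)
      _ ≤ 1 := ih

lemma bCB_tendsto : Tendsto bCB atTop (𝓝 0) := by
  have h1 : Tendsto (fun n : ℕ => Real.sqrt (1 / ((n : ℝ) + 1))) atTop (𝓝 0) := by
    have := (tendsto_one_div_add_atTop_nhds_zero_nat : Tendsto (fun n : ℕ => 1 / ((n : ℝ) + 1)) atTop (𝓝 0))
    simpa using this.sqrt
  refine tendsto_of_tendsto_of_tendsto_of_le_of_le tendsto_const_nhds h1
    (fun n => (bCB_pos n).le) (fun n => ?_)
  have hsq : bCB n ^ 2 ≤ 1 / ((n : ℝ) + 1) := by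
    rw [le_div_iff₀ (by positivity)]
    linarith [bCB_sq n]
  calc bCB n = Real.sqrt (bCB n ^ 2) := (Real.sqrt_sq (bCB_pos n).le).symm
    _ ≤ Real.sqrt (1 / ((n : ℝ) + 1)) := Real.sqrt_le_sqrt hsq

lemma term_eq (k : ℕ) :
    (1 : ℝ) / (2 * k + 1) * (Nat.choose (2 * k + 2) (k + 1)) * (1 / 4 : ℝ) ^ (k + 1)
      = bCB k - bCB (k + 1) := by
  have hcb : (Nat.choose (2 * k + 2) (k + 1) : ℝ) = (Nat.centralBinom (k + 1) : ℝ) := by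
    unfold Nat.centralBinom; norm_num; ring_nf
  rw [hcb, bCB_succ]
  have hb := bCB_pos k
  unfold bCB
  have h2 : (2 * (k : ℝ) + 1) ≠ 0 := by positivity
  have h4 : (4 : ℝ) ^ k ≠ 0 := by positivity
  rw [div_pow, one_pow, pow_succ]
  field_simp
  have h' : ((k : ℝ) + 1) * Nat.centralBinom (k + 1)
      = 2 * (2 * k + 1) * Nat.centralBinom k := by
    exact_mod_cast congrArg (Nat.cast : ℕ → ℝ) (Nat.succ_mul_centralBinom_succ k)
  linear_combination 2 * h'

/-- `Σ_{k=1}^∞ (1/(2k-1)) C(2k,k) (1/4)^k` converges and equals `1`.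
(The series is indexed by `k : ℕ` via `k ↦ k+1`, so the term is
`(1/(2k+1)) C(2k+2, k+1) (1/4)^{k+1}`.) -/
theorem return_series_eq_one :
    Summable (fun k : ℕ =>
      (1 : ℝ) / (2 * k + 1) * (Nat.choose (2 * k + 2) (k + 1)) * (1 / 4 : ℝ) ^ (k + 1)) ∧
    ∑' k : ℕ,
      (1 : ℝ) / (2 * k + 1) * (Nat.choose (2 * k + 2) (k + 1)) * (1 / 4 : ℝ) ^ (k + 1) = 1 := by
  set f : ℕ → ℝ := fun k =>
    (1 : ℝ) / (2 * k + 1) * (Nat.choose (2 * k + 2) (k + 1)) * (1 / 4 : ℝ) ^ (k + 1) with hf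
  have hnn : ∀ k, 0 ≤ f k := fun k => by positivity
  have hb0 : bCB 0 = 1 := by simp [bCB, Nat.centralBinom]
  have hpart : ∀ n, ∑ k ∈ range n, f k = 1 - bCB n := by
    intro n
    rw [show (1 : ℝ) = bCB 0 from hb0.symm, ← Finset.sum_range_sub' bCB n]
    exact Finset.sum_congr rfl fun k _ => term_eq k
  have htend : Tendsto (fun n => ∑ k ∈ range n, f k) atTop (𝓝 1) := by
    simp only [hpart]
    have := bCB_tendsto.const_sub (1 : ℝ)
    simpa using this
  have hs : HasSum f 1 := (hasSum_iff_tendsto_nat_of_nonneg hnn 1).mpr htend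
  exact ⟨hs.summable, hs.tsum_eq⟩
end

section
/- For p ∈ (0,1), Σ_{k=1}^∞ (1/(2k−1)) · C(2k,k) · (p(1−p))^k ≤ 1, with equality if and only if p = 1/2. -/
open Filter Finset

/-- `B k = centralBinom k / 4^k`. -/
noncomputable def Bfun (k : ℕ) : ℝ := (Nat.centralBinom k : ℝ) / 4 ^ k

lemma cb_succ (k : ℕ) :
    ((k : ℝ) + 1) * (Nat.centralBinom (k + 1) : ℝ)
      = 2 * (2 * k + 1) * (Nat.centralBinom k : ℝ) := by
  exact_mod_cast congrArg (Nat.cast (R := ℝ)) (Nat.succ_mul_centralBinom_succ k)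

lemma Brel (k : ℕ) : 2 * ((k : ℝ) + 1) * Bfun (k + 1) = (2 * k + 1) * Bfun k := by
  have h := cb_succ k
  have h4 : (4 : ℝ) ^ k ≠ 0 := by positivity
  unfold Bfun
  rw [pow_succ]
  field_simp
  linear_combination 2 * h

lemma Bpos (k : ℕ) : 0 < Bfun k := by
  unfold Bfun
  have := Nat.centralBinom_pos k
  positivity

lemma Bsucc (k : ℕ) : Bfun (k + 1) = (2 * k + 1) * Bfun k / (2 * ((k : ℝ) + 1)) := by
  have h := Brel k
  have hk1 : (2 * ((k : ℝ) + 1)) ≠ 0 := by positivity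
  field_simp
  linarith [h]

lemma Bsq (k : ℕ) : Bfun k ^ 2 * (2 * k + 1) ≤ 1 := by
  induction k with
  | zero => simp [Bfun, Nat.centralBinom]
  | succ k ih =>
    have hc : (0 : ℝ) ≤ (2 * (k : ℝ) + 1) * (2 * k + 3) := by positivity
    have h5 : (Bfun k ^ 2 * (2 * k + 1)) * ((2 * (k : ℝ) + 1) * (2 * k + 3))
        ≤ (2 * (k : ℝ) + 1) * (2 * k + 3) := mul_le_of_le_one_left hc ih
    have key : (2 * (k : ℝ) + 1) * (2 * k + 3) ≤ (2 * k + 2) ^ 2 := by nlinarith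
    rw [Bsucc k]
    push_cast
    rw [div_pow, div_mul_eq_mul_div, div_le_one (by positivity)]
    nlinarith [h5, key, sq_nonneg (Bfun k)]

lemma Btendsto : Tendsto Bfun atTop (nhds 0) := by
  have hup : ∀ k : ℕ, Bfun k ≤ Real.sqrt (1 / (2 * k + 1)) := by
    intro k
    have h1 : (0 : ℝ) < 2 * k + 1 := by positivity
    have h2 : Bfun k ^ 2 ≤ 1 / (2 * k + 1) := by
      rw [le_div_iff₀ h1]; exact Bsq k
    calc Bfun k = Real.sqrt (Bfun k ^ 2) := (Real.sqrt_sq (Bpos k).le).symm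
      _ ≤ Real.sqrt (1 / (2 * k + 1)) := Real.sqrt_le_sqrt h2
  have hlin : Tendsto (fun k : ℕ => (2 * (k : ℝ) + 1)) atTop atTop := by
    apply tendsto_atTop_add_const_right
    exact Tendsto.const_mul_atTop (by norm_num) tendsto_natCast_atTop_atTop
  have h0 : Tendsto (fun k : ℕ => (1 : ℝ) / (2 * k + 1)) atTop (nhds 0) := by
    simp_rw [one_div]
    exact Tendsto.comp tendsto_inv_atTop_zero hlin
  have hs : Tendsto (fun k : ℕ => Real.sqrt (1 / (2 * k + 1))) atTop (nhds 0) := by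
    simpa using h0.sqrt
  exact tendsto_of_tendsto_of_tendsto_of_le_of_le tendsto_const_nhds hs
    (fun k => (Bpos k).le) hup

/-- The term of the series at `x`. -/
noncomputable def term (x : ℝ) (k : ℕ) : ℝ :=
  (1 : ℝ) / (2 * k + 1) * (Nat.choose (2 * k + 2) (k + 1)) * x ^ (k + 1)

lemma choose_eq_cb (k : ℕ) : Nat.choose (2 * k + 2) (k + 1) = Nat.centralBinom (k + 1) := by
  simp [Nat.centralBinom, Nat.mul_succ]

lemma term_quarter (k : ℕ) : term (1 / 4) k = Bfun k - Bfun (k + 1) := by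
  have hrel := Brel k
  have h1 : (2 * (k : ℝ) + 1) ≠ 0 := by positivity
  have hk1 : ((k : ℝ) + 1) ≠ 0 := by positivity
  have hb := Bsucc k
  have hterm : term (1 / 4) k = Bfun (k + 1) / (2 * k + 1) := by
    unfold term Bfun
    rw [choose_eq_cb]
    rw [div_pow, one_pow]
    ring
  rw [hterm, hb]
  field_simp
  ring

lemma hasSum_quarter : HasSum (term (1 / 4)) 1 := by
  rw [hasSum_iff_tendsto_nat_of_nonneg]
  · have hsum : ∀ n : ℕ, ∑ i ∈ Finset.range n, term (1 / 4) i = Bfun 0 - Bfun n := by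
      intro n
      simp_rw [term_quarter]
      exact Finset.sum_range_sub' Bfun n
    simp_rw [hsum]
    have h0 : Bfun 0 = 1 := by simp [Bfun, Nat.centralBinom]
    rw [h0]
    simpa using tendsto_const_nhds.sub Btendsto
  · intro i
    unfold term
    positivity

lemma term_nonneg {x : ℝ} (hx : 0 ≤ x) (k : ℕ) : 0 ≤ term x k := by
  unfold term; positivity

lemma term_le {x : ℝ} (hx0 : 0 ≤ x) (hx : x ≤ 1 / 4) (k : ℕ) :
    term x k ≤ term (1 / 4) k := by
  unfold term
  have := pow_le_pow_left₀ hx0 hx (k + 1)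
  have hc : (0 : ℝ) ≤ (1 : ℝ) / (2 * k + 1) * (Nat.choose (2 * k + 2) (k + 1)) := by
    positivity
  exact mul_le_mul_of_nonneg_left this hc

/-- For `p ∈ (0,1)`, `Σ_{k=1}^∞ (1/(2k-1)) C(2k,k) (p(1-p))^k ≤ 1`, with equality
iff `p = 1/2`. (The series is indexed by `k : ℕ` via `k ↦ k+1`.) -/
theorem biased_return_probability_le_one (p : ℝ) (hp : p ∈ Set.Ioo (0 : ℝ) 1) :
    (∑' k : ℕ,
        (1 : ℝ) / (2 * k + 1) * (Nat.choose (2 * k + 2) (k + 1)) * (p * (1 - p)) ^ (k + 1)) ≤ 1 ∧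
    ((∑' k : ℕ,
        (1 : ℝ) / (2 * k + 1) * (Nat.choose (2 * k + 2) (k + 1)) * (p * (1 - p)) ^ (k + 1)) = 1
      ↔ p = 1 / 2) := by
  obtain ⟨hp0, hp1⟩ := hp
  set x := p * (1 - p) with hx
  have hx0 : 0 ≤ x := by nlinarith
  have hx4 : x ≤ 1 / 4 := by nlinarith [sq_nonneg (p - 1 / 2)]
  have hS : Summable (term (1 / 4)) := hasSum_quarter.summable
  have hsumx : Summable (term x) :=
    Summable.of_nonneg_of_le (term_nonneg hx0) (term_le hx0 hx4) hS
  have hkey : (∑' k : ℕ, (1 : ℝ) / (2 * k + 1) * (Nat.choose (2 * k + 2) (k + 1))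
      * (p * (1 - p)) ^ (k + 1)) = ∑' k, term x k := by
    rfl
  have hle : (∑' k, term x k) ≤ 1 := by
    calc (∑' k, term x k) ≤ ∑' k, term (1 / 4) k :=
          Summable.tsum_le_tsum (term_le hx0 hx4) hsumx hS
      _ = 1 := hasSum_quarter.tsum_eq
  rw [hkey]
  refine ⟨hle, ⟨?_, ?_⟩⟩
  · intro heq
    by_contra hne
    have hlt : x < 1 / 4 := by
      rcases lt_or_eq_of_le hx4 with h | h
      · exact h
      · exfalso; apply hne; nlinarith [sq_nonneg (p - 1 / 2)]
    have h0 : term x 0 < term (1 / 4) 0 := by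
      unfold term
      norm_num
      linarith
    have := Summable.tsum_lt_tsum_of_nonneg (term_nonneg hx0) (term_le hx0 hx4) h0 hS
    rw [hasSum_quarter.tsum_eq] at this
    linarith [heq, this]
  · intro hpe
    have : x = 1 / 4 := by rw [hx, hpe]; norm_num
    rw [this]
    exact hasSum_quarter.tsum_eq
end
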